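/- arXiv:2302.02361 — 4 statements merged into one kernel-verified Lean document; each statement's English description precedes it below -/
import Mathlib

section
/- For any vectors u, v in ℝ², with f(w) := (|w|² − 1)w, it holds that (u − v)·f(u) ≥ (1/4)(|u|⁴ − |v|⁴) − (1/2)(|u|² − |v|²) − (1/2)|u − v|². -/
/-!
The force splits as `f(u) = ‖u‖² u - u`, the gradients of the convex energy `¼‖w‖⁴` and of the
concave energy `-½‖w‖²`. For the concave part the inequality is an exact polarization identity;
for the convex part it is the gradient inequality of `¼‖w‖⁴`, which after Cauchy–Schwarz reduces
to `‖u‖³‖v‖ ≤ ¾‖u‖⁴ + ¼‖v‖⁴`.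
-/

variable {E : Type*} [NormedAddCommGroup E] [InnerProductSpace ℝ E]

theorem inner_sub_neg_self_eq (u v : E) :
    (inner ℝ (u - v) (-u) : ℝ) = -(1 / 2) * (‖u‖ ^ 2 - ‖v‖ ^ 2) - (1 / 2) * ‖u - v‖ ^ 2 := by
  rw [inner_neg_right, inner_sub_left, real_inner_self_eq_norm_sq, real_inner_comm,
    norm_sub_sq_real]
  ring

theorem quarter_norm_pow_four_sub_le_inner (u v : E) :
    (1 / 4) * (‖u‖ ^ 4 - ‖v‖ ^ 4) ≤ inner ℝ (u - v) (‖u‖ ^ 2 • u) := by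
  have hcs : (inner ℝ u v : ℝ) ≤ ‖u‖ * ‖v‖ := real_inner_le_norm u v
  have hinner : (inner ℝ (u - v) (‖u‖ ^ 2 • u) : ℝ) = ‖u‖ ^ 2 * (‖u‖ ^ 2 - inner ℝ u v) := by
    rw [real_inner_smul_right, inner_sub_left, real_inner_self_eq_norm_sq, real_inner_comm]
  -- `¾a⁴ - a³b + ¼b⁴ = ¼(a - b)²(3a² + 2ab + b²)`
  have hyoung : ‖u‖ ^ 3 * ‖v‖ ≤ (3 / 4) * ‖u‖ ^ 4 + (1 / 4) * ‖v‖ ^ 4 := by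
    nlinarith [mul_nonneg (sq_nonneg (‖u‖ - ‖v‖))
      (by positivity : (0 : ℝ) ≤ 3 * ‖u‖ ^ 2 + 2 * ‖u‖ * ‖v‖ + ‖v‖ ^ 2)]
  rw [hinner]
  nlinarith [mul_le_mul_of_nonneg_left hcs (sq_nonneg ‖u‖)]

theorem stmt0 (u v : EuclideanSpace ℝ (Fin 2)) :
    (inner ℝ (u - v) ((‖u‖ ^ 2 - 1) • u) : ℝ) ≥
      (1 / 4) * (‖u‖ ^ 4 - ‖v‖ ^ 4) - (1 / 2) * (‖u‖ ^ 2 - ‖v‖ ^ 2)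
        - (1 / 2) * ‖u - v‖ ^ 2 := by
  have hsplit : (‖u‖ ^ 2 - 1) • u = ‖u‖ ^ 2 • u + -u := by
    rw [sub_smul, one_smul, sub_eq_add_neg]
  rw [hsplit, inner_add_right, inner_sub_neg_self_eq]
  linarith [quarter_norm_pow_four_sub_le_inner u v]
end

section
/- For any vectors u, v in ℝ² and z := u − v, with f(w) := (|w|² − 1)w, it holds that z·(f(u) − f(v)) ≥ (1/2)|v|²|z|² + (1/2)(u·z)² − |z|². -/
/-!
Write `z = u - v`. Since `‖u‖² - ‖v‖² = ⟪z, u + v⟫ = 2⟪u, z⟫ - ‖z‖²`, the pairing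
`⟪z, ‖u‖² u - ‖v‖² v⟫` is a polynomial in `a = ⟪u, z⟫`, `s = ‖z‖²` and `‖v‖²`.
Cauchy–Schwarz bounds `(a - s)² = ⟪v, z⟫²` by `‖v‖² s`, and what remains of the
inequality is `(2a - s)² ≥ 0`.
-/

open RealInnerProductSpace

variable {E : Type*} [NormedAddCommGroup E] [InnerProductSpace ℝ E]

theorem inner_sub_smul_norm_sq_sub_smul_norm_sq (u v : E) :
    ⟪u - v, ‖u‖ ^ 2 • u - ‖v‖ ^ 2 • v⟫ =
      ‖v‖ ^ 2 * ‖u - v‖ ^ 2 + 2 * ⟪u, u - v⟫ ^ 2 - ‖u - v‖ ^ 2 * ⟪u, u - v⟫ := by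
  simp only [← real_inner_self_eq_norm_sq, inner_sub_left, inner_sub_right, inner_smul_right,
    real_inner_comm u v]
  ring

theorem inner_sub_smul_norm_sq_sub_one_sub_ge (u v : E) :
    ⟪u - v, (‖u‖ ^ 2 - 1) • u - (‖v‖ ^ 2 - 1) • v⟫ ≥
      1 / 2 * ‖v‖ ^ 2 * ‖u - v‖ ^ 2 + 1 / 2 * ⟪u, u - v⟫ ^ 2 - ‖u - v‖ ^ 2 := by
  have hsplit : ⟪u - v, (‖u‖ ^ 2 - 1) • u - (‖v‖ ^ 2 - 1) • v⟫ =
      ⟪u - v, ‖u‖ ^ 2 • u - ‖v‖ ^ 2 • v⟫ - ‖u - v‖ ^ 2 := by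
    rw [sub_smul, sub_smul, one_smul, one_smul, ← real_inner_self_eq_norm_sq (u - v),
      ← inner_sub_right]
    congr 1
    abel
  have hcs : ⟪v, u - v⟫ ^ 2 ≤ ‖v‖ ^ 2 * ‖u - v‖ ^ 2 := by
    rw [← sq_abs, ← mul_pow]
    exact pow_le_pow_left₀ (abs_nonneg _) (abs_real_inner_le_norm v (u - v)) 2
  have hvz : ⟪v, u - v⟫ = ⟪u, u - v⟫ - ‖u - v‖ ^ 2 := by
    rw [← real_inner_self_eq_norm_sq, ← inner_sub_left, sub_sub_cancel]
  rw [hvz] at hcs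
  rw [hsplit, inner_sub_smul_norm_sq_sub_smul_norm_sq]
  linear_combination (1 / 2 : ℝ) * hcs +
    (1 / 2 : ℝ) * sq_nonneg (2 * ⟪u, u - v⟫ - ‖u - v‖ ^ 2)

theorem stmt1 (u v : EuclideanSpace ℝ (Fin 2)) :
    (inner ℝ (u - v) ((‖u‖ ^ 2 - 1) • u - (‖v‖ ^ 2 - 1) • v) : ℝ) ≥
      (1 / 2) * ‖v‖ ^ 2 * ‖u - v‖ ^ 2 + (1 / 2) * (inner ℝ u (u - v) : ℝ) ^ 2
        - ‖u - v‖ ^ 2 :=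
  inner_sub_smul_norm_sq_sub_one_sub_ge u v
end

section
/- With the BDF2 kernels b and DOC kernels θ as defined by the discrete orthogonality identity ∑_{j=k}^n θ_{n−j}^{(n)} b_{j−k}^{(j)} = δ_{nk}, for any sequence (v^j)_{j=0}^n in a vector space, one has ∑_{j=1}^n θ_{n−j}^{(n)} D_2 v^j = v^n − v^{n−1}, where D_2 v^j := ∑_{k=1}^j b_{j−k}^{(j)} (v^k − v^{k−1}). -/
open Finset

theorem sum_Icc_smul_sum_Icc_smul {R M : Type*} [Semiring R] [AddCommMonoid M] [Module R M]
    (m n : ℕ) (θ : ℕ → R) (b : ℕ → ℕ → R) (w : ℕ → M) :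
    ∑ j ∈ Icc m n, θ j • ∑ k ∈ Icc m j, b j k • w k
      = ∑ k ∈ Icc m n, (∑ j ∈ Icc k n, θ j * b j k) • w k := by
  simp_rw [smul_sum, smul_smul, sum_smul]
  exact sum_comm' fun j k => by simp only [mem_Icc]; omega

/-- With the DOC orthogonality identity, the DOC-weighted sum of the BDF2 differences
`D₂ v^j = ∑_{k=1}^j b_{j-k}^{(j)} (v^k - v^{k-1})` telescopes to `v^n - v^{n-1}`. -/
theorem stmt8 (E : Type*) [AddCommGroup E] [Module ℝ E] (n : ℕ) (hn : 1 ≤ n)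
    (b θ : ℕ → ℕ → ℝ)
    (horth : ∀ k, 1 ≤ k → k ≤ n →
      ∑ j ∈ Finset.Icc k n, θ n j * b j k = if n = k then 1 else 0)
    (v : ℕ → E) :
    ∑ j ∈ Finset.Icc 1 n, θ n j • (∑ k ∈ Finset.Icc 1 j, b j k • (v k - v (k - 1)))
      = v n - v (n - 1) := by
  rw [sum_Icc_smul_sum_Icc_smul]
  calc ∑ k ∈ Icc 1 n, (∑ j ∈ Icc k n, θ n j * b j k) • (v k - v (k - 1))
      = ∑ k ∈ Icc 1 n, (if n = k then (1 : ℝ) else 0) • (v k - v (k - 1)) :=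
        sum_congr rfl fun k hk => by rw [horth k (mem_Icc.1 hk).1 (mem_Icc.1 hk).2]
    _ = v n - v (n - 1) := by simp [ite_smul, hn]
end

section
/- Let 0 < r_j ≤ r_s for all j and define the scaled DOC coefficients θ̃_{k−j}^{(k)} = ((1+r_j)/(1+2r_j)) ∏_{i=j+1}^k r_i^{3/2}/(1+2r_i) for 1 ≤ j ≤ k. If m_* := r_s^{3/2}/(1+2r_s) < 1, then for every 1 ≤ k ≤ n, ∑_{j=1}^k θ̃_{k−j}^{(k)} + ∑_{j=k}^{n} θ̃_{j−k}^{(j)} < 2/(1 − m_*). -/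
/-!
Each factor `r_i^{3/2}/(1+2r_i)` is at most `m_*`, because `x ↦ x^{3/2}/(1+2x) = √x · x/(1+2x)` is
increasing, and the leading factor `(1+r_j)/(1+2r_j)` is at most `1`; hence `θ̃_{k-j}^{(k)} ≤ m_*^{k-j}`.
The exponents `k - j` in the first sum, and `j - k` in the second, are pairwise distinct, so each sum
is dominated by a partial sum of the geometric series `∑ m_*^i`, which is strictly below `1/(1-m_*)`.
-/

open Finset

lemma rpow_three_halves_div_le {x y : ℝ} (hx : 0 ≤ x) (hxy : x ≤ y) :
    x ^ ((3 : ℝ) / 2) / (1 + 2 * x) ≤ y ^ ((3 : ℝ) / 2) / (1 + 2 * y) := by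
  have split : ∀ t : ℝ, 0 ≤ t → t ^ ((3 : ℝ) / 2) / (1 + 2 * t) = √t * (t / (1 + 2 * t)) := by
    intro t ht
    rw [show (3 : ℝ) / 2 = 1 + 1 / 2 by norm_num, Real.rpow_one_add' ht (by norm_num),
      ← Real.sqrt_eq_rpow]
    ring
  rw [split x hx, split y (hx.trans hxy)]
  have hfrac : x / (1 + 2 * x) ≤ y / (1 + 2 * y) := by
    rw [div_le_div_iff₀ (by linarith) (by linarith)]
    linarith
  gcongr

lemma mul_prod_Icc_le_pow {a m : ℝ} {ρ : ℕ → ℝ} {j k : ℕ} (ha : a ≤ 1)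
    (hρ : ∀ i ∈ Icc (j + 1) k, 0 ≤ ρ i ∧ ρ i ≤ m) :
    a * ∏ i ∈ Icc (j + 1) k, ρ i ≤ m ^ (k - j) :=
  calc a * ∏ i ∈ Icc (j + 1) k, ρ i ≤ ∏ i ∈ Icc (j + 1) k, ρ i :=
        mul_le_of_le_one_left (prod_nonneg fun i hi => (hρ i hi).1) ha
    _ ≤ ∏ _i ∈ Icc (j + 1) k, m :=
        prod_le_prod (fun i hi => (hρ i hi).1) (fun i hi => (hρ i hi).2)
    _ = m ^ (k - j) := by rw [prod_const, Nat.card_Icc, Nat.add_sub_add_right]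

lemma geom_sum_lt_inv_one_sub {m : ℝ} (hm0 : 0 < m) (hm1 : m < 1) (N : ℕ) :
    ∑ i ∈ range N, m ^ i < (1 - m)⁻¹ := by
  have hpow : 0 < m ^ N := pow_pos hm0 N
  rw [geom_sum_eq hm1.ne, ← neg_div_neg_eq, neg_sub, neg_sub, inv_eq_one_div]
  gcongr
  linarith

lemma sum_pow_lt_of_injOn {m : ℝ} (hm0 : 0 < m) (hm1 : m < 1) {s : Finset ℕ} {e : ℕ → ℕ}
    (he : Set.InjOn e s) : ∑ j ∈ s, m ^ e j < (1 - m)⁻¹ := by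
  rw [← sum_image he]
  calc ∑ i ∈ s.image e, m ^ i ≤ ∑ i ∈ range ((s.image e).sup id + 1), m ^ i := by
        refine sum_le_sum_of_subset_of_nonneg (fun i hi => ?_) fun i _ _ => by positivity
        exact mem_range.2 (Nat.lt_succ_of_le (le_sup (f := id) hi))
    _ < (1 - m)⁻¹ := geom_sum_lt_inv_one_sub hm0 hm1 _

theorem stmt9 (n : ℕ) (r_s : ℝ) (hrs : 0 < r_s)
    (r : ℕ → ℝ) (hr : ∀ j, 1 ≤ j → j ≤ n → 0 < r j ∧ r j ≤ r_s)
    (hm : r_s ^ ((3 : ℝ) / 2) / (1 + 2 * r_s) < 1)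
    (θ : ℕ → ℕ → ℝ)
    (hθ : ∀ k j, 1 ≤ j → j ≤ k → k ≤ n →
      θ k j = ((1 + r j) / (1 + 2 * r j))
        * ∏ i ∈ Finset.Icc (j + 1) k, (r i) ^ ((3 : ℝ) / 2) / (1 + 2 * r i)) :
    ∀ k, 1 ≤ k → k ≤ n →
      (∑ j ∈ Finset.Icc 1 k, θ k j) + (∑ j ∈ Finset.Icc k n, θ j k)
        < 2 / (1 - r_s ^ ((3 : ℝ) / 2) / (1 + 2 * r_s)) := by
  intro k hk hkn
  set m := r_s ^ ((3 : ℝ) / 2) / (1 + 2 * r_s)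
  have hm0 : 0 < m := by positivity
  have hterm : ∀ l j, 1 ≤ j → j ≤ l → l ≤ n → θ l j ≤ m ^ (l - j) := by
    intro l j hj hjl hln
    obtain ⟨hrj, -⟩ := hr j hj (hjl.trans hln)
    rw [hθ l j hj hjl hln]
    refine mul_prod_Icc_le_pow ((div_le_one (by positivity)).2 (by linarith))
      fun i hi => ?_
    obtain ⟨hri, hri_le⟩ := hr i (by grind) (by grind)
    exact ⟨by positivity, rpow_three_halves_div_le hri.le hri_le⟩
  calc (∑ j ∈ Icc 1 k, θ k j) + (∑ j ∈ Icc k n, θ j k)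
      ≤ (∑ j ∈ Icc 1 k, m ^ (k - j)) + (∑ j ∈ Icc k n, m ^ (j - k)) := by
        gcongr with j hj j hj <;> rw [mem_Icc] at hj
        · exact hterm k j hj.1 hj.2 hkn
        · exact hterm j k hk hj.1 hj.2
    _ < (1 - m)⁻¹ + (1 - m)⁻¹ := by
        gcongr <;> refine sum_pow_lt_of_injOn hm0 hm fun i hi j hj hij => ?_ <;>
          simp only [coe_Icc, Set.mem_Icc] at hi hj <;> omega
    _ = 2 / (1 - m) := by ring
end
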